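/- arXiv:2411.19157 — 2 statements merged into one kernel-verified Lean document; each statement's English description precedes it below -/
import Mathlib

section
/- Let C_ω > 0, λ > 0, and let ψ_κ(s) = (κ/π)^{1/4}·e^{−κs²/2} for κ > 0. Then for every κ with 0 < κ < π/(4λ²), E_λ(ψ_κ) = (1/2)·(κ + 1/κ) + C_ω·(1 + Σ_{n=2}^∞ a_n·λ^{n−1}·κ^{(n−1)/2}), where a_n = ((−1)^n/n!)·((2n−4)!/(n−2)!)·(√n/2^{n−2})·(1/π)^{(n−1)/2}, the series converging absolutely. -/
open MeasureTheory Real Filter Topology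

noncomputable section

/-- `g` is the weak (distributional) derivative of `f` on `ℝ`. -/
def IsWeakDeriv (f g : ℝ → ℝ) : Prop :=
  ∀ φ : ℝ → ℝ, ContDiff ℝ (⊤ : ℕ∞) φ → HasCompactSupport φ →
    (∫ s, f s * deriv φ s) = - ∫ s, g s * φ s

/-- `f ∈ H¹(ℝ;ℝ)` with weak derivative `g`. -/
def MemH1 (f g : ℝ → ℝ) : Prop :=
  MemLp f 2 (volume : Measure ℝ) ∧ MemLp g 2 (volume : Measure ℝ) ∧ IsWeakDeriv f g

/-- The Muñoz–Delgado nonlinearity `f_λ(ρ) = (1+3λρ²)/√(1+2λρ²)`. -/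
def fMD (lam ρ : ℝ) : ℝ := (1 + 3 * lam * ρ ^ 2) / Real.sqrt (1 + 2 * lam * ρ ^ 2)

/-- `f` (with weak derivative `g`) is a real-valued distributional solution of the
stationary Muñoz–Delgado equation `-f'' + s² f + C_ω f_λ(|f|) f = μ f`. -/
def IsMDSolutionR (Cω lam μ : ℝ) (f g : ℝ → ℝ) : Prop :=
  ∀ φ : ℝ → ℝ, ContDiff ℝ (⊤ : ℕ∞) φ → HasCompactSupport φ →
    (∫ s, g s * deriv φ s) + (∫ s, (s ^ 2 + Cω * fMD lam (f s)) * f s * φ s)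
      = μ * ∫ s, f s * φ s

/-- `g` is the weak derivative of the complex-valued `f`. -/
def IsWeakDerivC (f g : ℝ → ℂ) : Prop :=
  ∀ φ : ℝ → ℂ, ContDiff ℝ (⊤ : ℕ∞) φ → HasCompactSupport φ →
    (∫ s, f s * deriv φ s) = - ∫ s, g s * φ s

/-- `f ∈ H¹(ℝ;ℂ)` with weak derivative `g`. -/
def MemH1C (f g : ℝ → ℂ) : Prop :=
  MemLp f 2 (volume : Measure ℝ) ∧ MemLp g 2 (volume : Measure ℝ) ∧ IsWeakDerivC f g

/-- complex-valued distributional solution of the stationary Muñoz–Delgado equation. -/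
def IsMDSolutionC (Cω lam μ : ℝ) (f g : ℝ → ℂ) : Prop :=
  ∀ φ : ℝ → ℂ, ContDiff ℝ (⊤ : ℕ∞) φ → HasCompactSupport φ →
    (∫ s, g s * deriv φ s)
      + (∫ s, ((s ^ 2 + Cω * fMD lam ‖f s‖ : ℝ) : ℂ) * f s * φ s)
      = (μ : ℂ) * ∫ s, f s * φ s

/-- membership in the weighted space `X` (real valued). -/
def MemX (f g : ℝ → ℝ) : Prop :=
  MemH1 f g ∧ Integrable (fun s => s ^ 2 * (f s) ^ 2) (volume : Measure ℝ)

/-- membership in the weighted space `X̂` (complex valued). -/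
def MemXC (f g : ℝ → ℂ) : Prop :=
  MemH1C f g ∧ Integrable (fun s => s ^ 2 * ‖f s‖ ^ 2) (volume : Measure ℝ)

/-- the energy functional `E_λ` (real valued functions). -/
def energy (Cω lam : ℝ) (f g : ℝ → ℝ) : ℝ :=
  (∫ s, (g s) ^ 2) + (∫ s, s ^ 2 * (f s) ^ 2)
    + Cω * ∫ s, Real.sqrt (1 + 2 * lam * (f s) ^ 2) * (f s) ^ 2

/-- the energy functional `E_λ` (complex valued functions). -/
def energyC (Cω lam : ℝ) (f g : ℝ → ℂ) : ℝ :=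
  (∫ s, ‖g s‖ ^ 2) + (∫ s, s ^ 2 * ‖f s‖ ^ 2)
    + Cω * ∫ s, Real.sqrt (1 + 2 * lam * ‖f s‖ ^ 2) * ‖f s‖ ^ 2

/-- the charge `Q` (real). -/
def charge (f : ℝ → ℝ) : ℝ := ∫ s, (f s) ^ 2

/-- the charge `Q` (complex). -/
def chargeC (f : ℝ → ℂ) : ℝ := ∫ s, ‖f s‖ ^ 2

/-- minimal energy `E_min(λ) = inf{E_λ(ψ) : ψ ∈ Σ₁}`. -/
def Emin (Cω lam : ℝ) : ℝ :=
  sInf {E : ℝ | ∃ f g : ℝ → ℝ, MemX f g ∧ charge f = 1 ∧ E = energy Cω lam f g}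

/-- the `X̂`-norm of a pair (function, weak derivative) of complex functions. -/
def normXC (f g : ℝ → ℂ) : ℝ :=
  Real.sqrt ((∫ s, ‖g s‖ ^ 2) + ∫ s, s ^ 2 * ‖f s‖ ^ 2)

/-- the `X`-norm of a pair (function, weak derivative) of real functions. -/
def normX (f g : ℝ → ℝ) : ℝ :=
  Real.sqrt ((∫ s, (g s) ^ 2) + ∫ s, s ^ 2 * (f s) ^ 2)

/-- distance (in `X̂`) from the pair `(f,g)` to the orbit `{e^{iθ}(u,v)}`. -/
def distToOrbit (f g : ℝ → ℂ) (u v : ℝ → ℝ) : ℝ :=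
  ⨅ θ ∈ Set.Icc (0 : ℝ) (2 * π),
    normXC (fun s => f s - Complex.exp (θ * Complex.I) * (u s : ℂ))
           (fun s => g s - Complex.exp (θ * Complex.I) * (v s : ℂ))


/-- the normalized Gaussian trial function `ψ_κ(s) = (κ/π)^{1/4} e^{-κ s²/2}`. -/
def gaussK (κ : ℝ) : ℝ → ℝ := fun s => (κ / π) ^ ((1 : ℝ) / 4) * Real.exp (-κ * s ^ 2 / 2)

/-- its derivative `ψ_κ'(s) = -κ s ψ_κ(s)`. -/
def gaussKD (κ : ℝ) : ℝ → ℝ := fun s => -κ * s * gaussK κ s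

/-- the Taylor coefficients `a_n`. -/
def aCoef (n : ℕ) : ℝ :=
  ((-1 : ℝ) ^ n / (Nat.factorial n : ℝ))
    * ((Nat.factorial (2 * n - 4) : ℝ) / (Nat.factorial (n - 2) : ℝ))
    * (Real.sqrt n / 2 ^ (n - 2)) * (1 / Real.sqrt π) ^ (n - 1)

/-- coefficients of binomial series for (1+x)^(1/2) -/
def bc : ℕ → ℝ
  | 0 => 1
  | (n+1) => bc n * ((1/2 - n) / (n+1))

lemma bc_abs_le_one (n : ℕ) : |bc n| ≤ 1 := by
  induction n with
  | zero => simp [bc]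
  | succ n ih =>
    have h1 : |(1/2 - (n:ℝ)) / (n+1)| ≤ 1 := by
      rw [abs_div, div_le_one (by positivity)]
      rw [abs_of_nonneg (by positivity : (0:ℝ) ≤ (n:ℝ)+1)]
      rw [abs_le]
      constructor <;> nlinarith [Nat.cast_nonneg (α := ℝ) n]
    calc |bc (n+1)| = |bc n| * |(1/2 - (n:ℝ)) / (n+1)| := by rw [bc, abs_mul]
    _ ≤ 1 * 1 := mul_le_mul ih h1 (abs_nonneg _) zero_le_one
    _ = 1 := by ring

lemma bc_rec (k : ℕ) : bc (k+1) * (k+1) = bc k * (1/2 - k) := by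
  rw [bc]
  have : ((k:ℝ)+1) ≠ 0 := by positivity
  field_simp

lemma bc_closed (k : ℕ) :
    bc (k+1) = (-1)^k * (Nat.factorial (2*k)) / ((Nat.factorial (k+1)) * (Nat.factorial k) * 2^(2*k+1)) := by
  induction k with
  | zero => norm_num [bc, Nat.factorial]
  | succ k ih =>
    rw [bc, ih]
    have h2 : (2*(k+1)) = (2*k+1) + 1 := by ring
    rw [h2]
    simp only [Nat.factorial_succ]
    push_cast
    have hk1 : ((k:ℝ)+1) ≠ 0 := by positivity
    have hk2 : ((k:ℝ)+2) ≠ 0 := by positivity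
    have hfk : (Nat.factorial k : ℝ) ≠ 0 := Nat.cast_ne_zero.mpr (Nat.factorial_ne_zero k)
    have hfk1 : ((Nat.factorial (k+1)) : ℝ) ≠ 0 := Nat.cast_ne_zero.mpr (Nat.factorial_ne_zero _)
    have hf2k : ((Nat.factorial (2*k)) : ℝ) ≠ 0 := Nat.cast_ne_zero.mpr (Nat.factorial_ne_zero _)
    have h2p : ((2:ℝ))^(2*k+1) ≠ 0 := by positivity
    field_simp
    ring

/-- the binomial series sum -/
def bS (x : ℝ) : ℝ := ∑' m : ℕ, bc m * x ^ m

/-- its termwise derivative -/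
def bSd (x : ℝ) : ℝ := ∑' m : ℕ, bc m * (m * x ^ (m-1))

lemma summable_bS {x : ℝ} (hx : |x| < 1) : Summable (fun m : ℕ => bc m * x ^ m) := by
  refine Summable.of_norm_bounded (g := fun m => |x| ^ m) (summable_geometric_of_lt_one (abs_nonneg x) hx) ?_
  intro m
  rw [norm_mul, norm_pow]
  calc ‖bc m‖ * ‖x‖ ^ m ≤ 1 * ‖x‖ ^ m :=
        mul_le_mul_of_nonneg_right (bc_abs_le_one m) (by positivity)
  _ = |x| ^ m := by rw [one_mul]; rfl

lemma summable_deriv_bound {r : ℝ} (hr : |r| < 1) :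
    Summable (fun m : ℕ => (m : ℝ) * r ^ (m - 1)) := by
  rw [← summable_nat_add_iff 1]
  have h1 : Summable (fun k : ℕ => (k : ℝ) * r ^ k) := by
    simpa using summable_pow_mul_geometric_of_norm_lt_one 1 (by rwa [Real.norm_eq_abs])
  have h2 : Summable (fun k : ℕ => r ^ k) :=
    summable_geometric_of_norm_lt_one (by rwa [Real.norm_eq_abs])
  have := h1.add h2
  refine this.congr (fun k => ?_)
  push_cast
  ring_nf

lemma summable_bSd {x : ℝ} (hx : |x| < 1) :
    Summable (fun m : ℕ => bc m * ((m:ℝ) * x ^ (m-1))) := by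
  refine Summable.of_norm_bounded (g := fun m => (m : ℝ) * |x| ^ (m-1)) (summable_deriv_bound (by rw [_root_.abs_abs]; exact hx)) ?_
  intro m
  rw [norm_mul, norm_mul]
  calc ‖bc m‖ * (‖(m:ℝ)‖ * ‖x ^ (m-1)‖) ≤ 1 * (‖(m:ℝ)‖ * ‖x ^ (m-1)‖) :=
        mul_le_mul_of_nonneg_right (bc_abs_le_one m) (by positivity)
  _ = (m : ℝ) * |x| ^ (m-1) := by
      rw [one_mul, norm_pow]; simp [Real.norm_eq_abs]

lemma hasDerivAt_bS {r x : ℝ} (hr0 : 0 < r) (hr : r < 1) (hx : x ∈ Set.Ioo (-r) r) :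
    HasDerivAt bS (bSd x) x := by
  have habs : ∀ y ∈ Set.Ioo (-r : ℝ) r, |y| < r := by
    intro y hy; rw [abs_lt]; exact ⟨hy.1, hy.2⟩
  refine hasDerivAt_tsum_of_isPreconnected
    (u := fun (m : ℕ) => (m : ℝ) * r ^ (m-1))
    (g := fun (m : ℕ) (y : ℝ) => bc m * y ^ m)
    (g' := fun (m : ℕ) (y : ℝ) => bc m * ((m:ℝ) * y ^ (m-1)))
    (summable_deriv_bound (by rwa [abs_of_pos hr0])) isOpen_Ioo
    (isPreconnected_Ioo) ?_ ?_ (y₀ := 0) ?_ ?_ hx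
  · intro m y _
    simpa using ((hasDerivAt_pow m y).const_mul (bc m))
  · intro m y hy
    rw [norm_mul, norm_mul, norm_pow, Real.norm_natCast]
    have h1 : |y| ^ (m - 1) ≤ r ^ (m-1) :=
      pow_le_pow_left₀ (abs_nonneg y) (le_of_lt (habs y hy)) _
    calc ‖bc m‖ * ((m:ℝ) * ‖y‖ ^ (m-1)) ≤ 1 * ((m:ℝ) * ‖y‖ ^ (m-1)) :=
          mul_le_mul_of_nonneg_right (bc_abs_le_one m) (by positivity)
    _ = (m:ℝ) * |y| ^ (m-1) := by rw [one_mul]; rfl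
    _ ≤ (m:ℝ) * r ^ (m-1) := mul_le_mul_of_nonneg_left h1 (Nat.cast_nonneg m)
  · exact ⟨neg_neg_iff_pos.mpr hr0, hr0⟩
  · exact summable_bS (by norm_num)

lemma bS_zero : bS 0 = 1 := by
  rw [bS, tsum_eq_single 0]
  · simp [bc]
  · intro m hm
    cases m with
    | zero => simp at hm
    | succ k => simp

lemma bSd_identity {x : ℝ} (hx : |x| < 1) : (1 + x) * bSd x = (1/2) * bS x := by
  have hd := summable_bSd hx
  have hmul : Summable (fun m : ℕ => bc m * ((m:ℝ) * x ^ m)) := by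
    refine Summable.of_norm_bounded (g := fun m => (m : ℝ) * |x| ^ m)
      (by simpa using summable_pow_mul_geometric_of_norm_lt_one 1 (by rw [Real.norm_eq_abs, _root_.abs_abs]; exact hx)) ?_
    intro m
    rw [norm_mul, norm_mul, norm_pow, Real.norm_natCast, Real.norm_eq_abs, Real.norm_eq_abs]
    calc |bc m| * ((m:ℝ) * |x| ^ m) ≤ 1 * ((m:ℝ) * |x| ^ m) :=
          mul_le_mul_of_nonneg_right (bc_abs_le_one m) (by positivity)
    _ = (m:ℝ) * |x| ^ m := one_mul _
  have hxSd : x * bSd x = ∑' m : ℕ, bc m * ((m:ℝ) * x ^ m) := by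
    rw [bSd, ← tsum_mul_left]
    refine tsum_congr (fun m => ?_)
    cases m with
    | zero => simp
    | succ k => push_cast; ring
  have hSd : bSd x = ∑' k : ℕ, bc (k+1) * (((k:ℝ)+1) * x ^ k) := by
    rw [bSd, Summable.tsum_eq_zero_add hd]
    simp only [Nat.cast_zero, zero_mul, mul_zero, zero_add]
    refine tsum_congr (fun k => ?_)
    push_cast
    simp
  have hshift : Summable (fun k : ℕ => bc (k+1) * (((k:ℝ)+1) * x ^ k)) := by
    have := (summable_nat_add_iff 1).mpr hd
    refine this.congr (fun k => ?_)
    push_cast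
    simp
  have key : ∀ k : ℕ, bc (k+1) * (((k:ℝ)+1) * x ^ k) + bc k * ((k:ℝ) * x ^ k)
      = (1/2) * (bc k * x ^ k) := by
    intro k
    linear_combination x ^ k * bc_rec k
  calc (1 + x) * bSd x = bSd x + x * bSd x := by ring
  _ = (∑' k : ℕ, bc (k+1) * (((k:ℝ)+1) * x ^ k)) + ∑' m : ℕ, bc m * ((m:ℝ) * x ^ m) := by
      rw [hxSd, hSd]
  _ = ∑' k : ℕ, (bc (k+1) * (((k:ℝ)+1) * x ^ k) + bc k * ((k:ℝ) * x ^ k)) :=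
      (Summable.tsum_add hshift hmul).symm
  _ = ∑' k : ℕ, (1/2) * (bc k * x ^ k) := tsum_congr key
  _ = (1/2) * bS x := by rw [tsum_mul_left]; rfl

lemma bS_sq {x : ℝ} (hx : |x| < 1) : bS x ^ 2 = 1 + x := by
  set r : ℝ := (1 + |x|) / 2 with hrdef
  have hr0 : 0 < r := by positivity
  have hr1 : r < 1 := by
    rw [hrdef]; linarith
  have hxr : |x| < r := by rw [hrdef]; linarith
  have hxmem : x ∈ Set.Ioo (-r) r := by
    rw [Set.mem_Ioo, ← abs_lt]; exact hxr
  have h0mem : (0:ℝ) ∈ Set.Ioo (-r) r := by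
    constructor <;> simp [hr0, neg_neg_iff_pos.mpr hr0]
  set F : ℝ → ℝ := fun y => bS y ^ 2 / (1 + y) with hFdef
  have hF : ∀ y ∈ Set.Ioo (-r : ℝ) r, HasDerivAt F 0 y := by
    intro y hy
    have hyabs : |y| < 1 := lt_trans (abs_lt.mpr ⟨hy.1, hy.2⟩) hr1
    have hne : (1 : ℝ) + y ≠ 0 := by
      have := (abs_lt.mp hyabs).1; linarith
    have hS := hasDerivAt_bS hr0 hr1 hy
    have hsq : HasDerivAt (fun z => bS z ^ 2) (2 * bS y * bSd y) y := by
      simpa [mul_comm, mul_assoc, mul_left_comm] using hS.fun_pow 2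
    have hden : HasDerivAt (fun z : ℝ => 1 + z) 1 y := by
      simpa using (hasDerivAt_id y).const_add 1
    have hdiv := hsq.div hden hne
    have hnum : (2 * bS y * bSd y * (1 + y) - bS y ^ 2 * 1) / (1 + y) ^ 2 = 0 := by
      have hid := bSd_identity hyabs
      have : 2 * bS y * bSd y * (1 + y) - bS y ^ 2 * 1 = 0 := by
        linear_combination 2 * bS y * hid
      rw [this, zero_div]
    rwa [hnum] at hdiv
  have hconst : F x = F 0 := by
    refine (convex_Ioo (-r) r).is_const_of_fderivWithin_eq_zero (𝕜 := ℝ)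
      (fun y hy => ((hF y hy).differentiableAt).differentiableWithinAt) ?_ hxmem h0mem
    intro y hy
    rw [fderivWithin_of_isOpen isOpen_Ioo hy,
      (hasDerivAt_iff_hasFDerivAt.mp (hF y hy)).fderiv]
    ext z
    simp
  have hne : (1 : ℝ) + x ≠ 0 := by
    have := (abs_lt.mp hx).1; linarith
  have hF0 : F 0 = 1 := by
    simp [hFdef, bS_zero]
  rw [hF0] at hconst
  have : bS x ^ 2 / (1 + x) = 1 := hconst
  field_simp at this
  linarith [this]

lemma bS_pos {x : ℝ} (hx0 : 0 ≤ x) (hx : x < 1) : 0 < bS x := by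
  have habs : |x| < 1 := by rwa [abs_of_nonneg hx0]
  by_contra h
  push_neg at h
  have hxne : bS x ≠ 0 := by
    intro h0
    have := bS_sq habs
    rw [h0] at this
    nlinarith
  have hxneg : bS x < 0 := lt_of_le_of_ne h hxne
  have hcont : ContinuousOn bS (Set.Icc 0 x) := by
    intro y hy
    have hy1 : |y| < 1 := by
      rw [abs_of_nonneg hy.1]; exact lt_of_le_of_lt hy.2 hx
    set r : ℝ := (1 + |y|)/2
    have hr0 : 0 < r := by positivity
    have hr1 : r < 1 := by simp only [r]; linarith
    have : y ∈ Set.Ioo (-r) r := by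
      rw [Set.mem_Ioo, ← abs_lt]; simp only [r]; linarith
    exact ((hasDerivAt_bS hr0 hr1 this).continuousAt).continuousWithinAt
  have h0lt : (0:ℝ) ∈ Set.Icc (bS x) (bS 0) := by
    rw [bS_zero]; exact ⟨le_of_lt hxneg, zero_le_one⟩
  obtain ⟨z, hz, hzval⟩ := intermediate_value_Icc' hx0 hcont h0lt
  have hz1 : |z| < 1 := by
    rw [abs_of_nonneg hz.1]; exact lt_of_le_of_lt hz.2 hx
  have := bS_sq hz1
  rw [hzval] at this
  nlinarith [hz.1]

lemma sqrt_eq_bS {x : ℝ} (hx0 : 0 ≤ x) (hx : x < 1) : Real.sqrt (1 + x) = bS x := by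
  have habs : |x| < 1 := by rwa [abs_of_nonneg hx0]
  rw [← bS_sq habs, Real.sqrt_sq (le_of_lt (bS_pos hx0 hx))]

lemma moment2 {b : ℝ} (hb : 0 < b) :
    ∫ s : ℝ, s ^ 2 * Real.exp (-b * s ^ 2) = Real.sqrt (π / b) / (2 * b) := by
  have h1 : (∫ s : ℝ, s ^ 2 * Real.exp (-b * s ^ 2))
      = ∫ s : ℝ, (fun x => x ^ 2 * Real.exp (-b * x ^ 2)) |s| := by
    refine integral_congr_ae (Filter.Eventually.of_forall (fun s => ?_))
    simp [sq_abs]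
  rw [h1, integral_comp_abs (f := fun x => x ^ 2 * Real.exp (-b * x ^ 2))]
  have h2 : (∫ x in Set.Ioi (0:ℝ), x ^ 2 * Real.exp (-b * x ^ 2))
      = ∫ x in Set.Ioi (0:ℝ), x ^ (2:ℝ) * Real.exp (-b * x ^ (2:ℝ)) := by
    refine setIntegral_congr_fun measurableSet_Ioi (fun x _ => ?_)
    norm_num [show ((2:ℝ)) = ((2:ℕ):ℝ) by norm_num, Real.rpow_natCast]
  rw [h2, integral_rpow_mul_exp_neg_mul_rpow (by norm_num) (by norm_num) hb]
  have hg : Real.Gamma (((2:ℝ) + 1) / 2) = Real.sqrt π / 2 := by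
    have h32 : ((2:ℝ) + 1) / 2 = 1/2 + 1 := by norm_num
    rw [h32, Real.Gamma_add_one (by norm_num), Real.Gamma_one_half_eq]
    ring
  rw [hg]
  have hb' : b ^ (-((2:ℝ) + 1) / 2) = 1 / (b * Real.sqrt b) := by
    have : (-((2:ℝ) + 1) / 2) = -(1 + 1/2) := by norm_num
    rw [this, Real.rpow_neg hb.le, Real.rpow_add hb, Real.rpow_one, ← Real.sqrt_eq_rpow]
    rw [one_div]
  rw [hb', Real.sqrt_div pi_nonneg b]
  have hsb : Real.sqrt b ≠ 0 := by positivity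
  have hbne : b ≠ 0 := ne_of_gt hb
  field_simp


lemma gaussK_sq {κ : ℝ} (hκ : 0 < κ) (s : ℝ) :
    gaussK κ s ^ 2 = Real.sqrt (κ/π) * Real.exp (-κ * s ^ 2) := by
  have hd : (0:ℝ) ≤ κ / π := by positivity
  have e1 : ((κ/π) ^ ((1:ℝ)/4)) ^ 2 = Real.sqrt (κ/π) := by
    rw [← Real.rpow_natCast ((κ/π) ^ ((1:ℝ)/4)) 2, ← Real.rpow_mul hd, Real.sqrt_eq_rpow]
    norm_num
  have e2 : (Real.exp (-κ * s ^ 2 / 2)) ^ 2 = Real.exp (-κ * s ^ 2) := by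
    rw [← Real.exp_nat_mul]
    congr 1
    push_cast
    ring
  rw [gaussK, mul_pow, e1, e2]

lemma sqrt_prod_one {κ : ℝ} (hκ : 0 < κ) :
    Real.sqrt (κ/π) * Real.sqrt (π/κ) = 1 := by
  rw [← Real.sqrt_mul (by positivity)]
  rw [show κ/π * (π/κ) = 1 by field_simp]
  exact Real.sqrt_one

lemma int_gaussK_pow {κ : ℝ} (hκ : 0 < κ) (m : ℕ) :
    ∫ s : ℝ, (gaussK κ s ^ 2) ^ (m+1)
      = (Real.sqrt (κ/π)) ^ (m+1) * Real.sqrt (π / (((m:ℝ)+1) * κ)) := by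
  have h1 : ∀ s : ℝ, (gaussK κ s ^ 2) ^ (m+1)
      = (Real.sqrt (κ/π)) ^ (m+1) * Real.exp (-((((m:ℝ)+1)) * κ) * s ^ 2) := by
    intro s
    rw [gaussK_sq hκ, mul_pow, ← Real.exp_nat_mul]
    congr 1
    push_cast
    ring
  simp_rw [h1]
  rw [integral_const_mul, integral_gaussian]


lemma term_eq {κ : ℝ} (hκ : 0 < κ) (lam : ℝ) (k : ℕ) :
    bc (k+1) * (2*lam)^(k+1) * (Real.sqrt (κ/π))^(k+2) * Real.sqrt (π/(((k:ℝ)+2)*κ))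
      = aCoef (k+2) * lam^(k+1) * Real.sqrt κ ^ (k+1) := by
  have hπ : 0 < π := pi_pos
  have h1 : Real.sqrt (κ/π) = Real.sqrt κ / Real.sqrt π := Real.sqrt_div hκ.le π
  have h2 : Real.sqrt (π/(((k:ℝ)+2)*κ))
      = Real.sqrt π / (Real.sqrt ((k:ℝ)+2) * Real.sqrt κ) := by
    rw [Real.sqrt_div hπ.le, Real.sqrt_mul (by positivity)]
  have hn1 : (k+2) - 2 = k := by omega
  have hn2 : 2*(k+2) - 4 = 2*k := by omega
  have hn3 : (k+2) - 1 = k+1 := by omega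
  have hsign : ((-1:ℝ)) ^ (k+2) = (-1:ℝ)^k := by
    rw [pow_add]; norm_num
  have hfact : ((Nat.factorial (k+2)) : ℝ) = ((k:ℝ)+2) * (Nat.factorial (k+1)) := by
    rw [show k+2 = (k+1)+1 by ring, Nat.factorial_succ]
    push_cast
    ring
  have hcast : ((k+2 : ℕ) : ℝ) = (k:ℝ)+2 := by push_cast; ring
  rw [aCoef, hn1, hn2, hn3, hsign, hfact, hcast, bc_closed, h1, h2]
  set a := Real.sqrt κ with ha
  set p := Real.sqrt π with hp
  set t := Real.sqrt ((k:ℝ)+2) with ht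
  have hp0 : 0 < p := Real.sqrt_pos.mpr hπ
  have ha0 : 0 ≤ a := Real.sqrt_nonneg κ
  have ha0' : a ≠ 0 := (Real.sqrt_pos.mpr hκ).ne'
  have hp0' : p ≠ 0 := hp0.ne'
  have ht2 : t * t = (k:ℝ)+2 := Real.mul_self_sqrt (by positivity)
  have ht0 : 0 < t := Real.sqrt_pos.mpr (by positivity)
  have hfk : ((Nat.factorial k):ℝ) ≠ 0 := Nat.cast_ne_zero.mpr (Nat.factorial_ne_zero k)
  have hfk1 : ((Nat.factorial (k+1)):ℝ) ≠ 0 := Nat.cast_ne_zero.mpr (Nat.factorial_ne_zero _)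
  have hk2 : ((k:ℝ)+2) ≠ 0 := by positivity
  rw [mul_pow (2:ℝ) lam (k+1), div_pow a p (k+2)]
  field_simp
  rw [← ht2]
  rw [one_div, inv_pow]
  field_simp
  ring


/-- for `0 < κ < π/(4λ²)`, the energy of the Gaussian trial function expands as
`E_λ(ψ_κ) = (κ + 1/κ)/2 + C_ω (1 + Σ_{n≥2} a_n λ^{n-1} κ^{(n-1)/2})`,
the series converging absolutely. -/
theorem stmt_18 (Cω lam κ : ℝ) (hCω : 0 < Cω) (hlam : 0 < lam)
    (hκ : 0 < κ) (hκ' : κ < π / (4 * lam ^ 2)) :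
    Summable (fun k : ℕ => |aCoef (k + 2) * lam ^ (k + 1) * Real.sqrt κ ^ (k + 1)|) ∧
    energy Cω lam (gaussK κ) (gaussKD κ)
      = (1 / 2) * (κ + 1 / κ)
        + Cω * (1 + ∑' k : ℕ, aCoef (k + 2) * lam ^ (k + 1) * Real.sqrt κ ^ (k + 1)) := by
  have hπ : 0 < π := pi_pos
  set ψ : ℝ → ℝ := gaussK κ with hψ
  set B : ℝ := Real.sqrt (κ/π) with hBdef
  have hB0 : 0 < B := Real.sqrt_pos.mpr (by positivity)
  have hBπκ : B * Real.sqrt (π/κ) = 1 := sqrt_prod_one hκ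
  have hr1 : 2 * lam * B < 1 := by
    have h1 : κ/π < 1/(4*lam^2) := by
      rw [div_lt_div_iff₀ hπ (by positivity)]
      rw [lt_div_iff₀ (by positivity : (0:ℝ) < 4 * lam^2)] at hκ'
      linarith
    have h2 : B < Real.sqrt (1/(4*lam^2)) := Real.sqrt_lt_sqrt (by positivity) h1
    have h3 : Real.sqrt (1/(4*lam^2)) = 1/(2*lam) := by
      rw [show (1:ℝ)/(4*lam^2) = (1/(2*lam))^2 by field_simp; ring]
      exact Real.sqrt_sq (by positivity)
    rw [h3] at h2
    calc 2*lam*B < 2*lam*(1/(2*lam)) := by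
          exact mul_lt_mul_of_pos_left h2 (by positivity)
    _ = 1 := by field_simp
  have hψsq : ∀ s, ψ s ^ 2 = B * Real.exp (-κ * s^2) := gaussK_sq hκ
  have hψle : ∀ s, ψ s ^ 2 ≤ B := by
    intro s
    rw [hψsq s]
    calc B * Real.exp (-κ*s^2) ≤ B * 1 := by
          refine mul_le_mul_of_nonneg_left ?_ hB0.le
          rw [Real.exp_le_one_iff]
          nlinarith [sq_nonneg s]
    _ = B := mul_one B
  have hx01 : ∀ s, 0 ≤ 2*lam*ψ s^2 := fun s => by positivity
  have hxlt : ∀ s, 2*lam*ψ s^2 < 1 := fun s =>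
    lt_of_le_of_lt (by nlinarith [hψle s]) hr1
  -- integrals of squares
  have hint2 : ∫ s : ℝ, s^2 * ψ s^2 = 1/(2*κ) := by
    have heq : ∀ s:ℝ, s^2 * ψ s^2 = B * (s^2 * Real.exp (-κ*s^2)) := by
      intro s; rw [hψsq s]; ring
    simp_rw [heq]
    rw [integral_const_mul, moment2 hκ,
      show B * (Real.sqrt (π/κ)/(2*κ)) = (B*Real.sqrt (π/κ))/(2*κ) by ring, hBπκ]
  have hintD : ∫ s : ℝ, (gaussKD κ s)^2 = κ/2 := by
    have heq : ∀ s:ℝ, (gaussKD κ s)^2 = κ^2 * (s^2 * ψ s^2) := by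
      intro s; rw [gaussKD]; simp only [hψ]; ring
    simp_rw [heq]
    rw [integral_const_mul, hint2]
    field_simp
  -- the nonlinear series
  set F : ℕ → ℝ → ℝ := fun m s => bc m * (2*lam)^m * (ψ s^2)^(m+1) with hF
  have hexp : ∀ (m : ℕ) (s : ℝ),
      (Real.exp (-κ*s^2))^(m+1) = Real.exp (-((((m:ℝ)+1))*κ) * s^2) := by
    intro m s
    rw [← Real.exp_nat_mul]
    congr 1
    push_cast
    ring
  have hFint : ∀ m, Integrable (F m) := by
    intro m
    have heq : F m = fun s => (bc m * (2*lam)^m * B^(m+1))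
        * Real.exp (-((((m:ℝ)+1))*κ) * s^2) := by
      funext s
      simp only [hF]
      rw [hψsq s, mul_pow B (Real.exp (-κ*s^2)) (m+1), hexp m s]
      ring
    rw [heq]
    exact (integrable_exp_neg_mul_sq (by positivity)).const_mul _
  have hFval : ∀ m, ∫ s, F m s
      = bc m * (2*lam)^m * (B^(m+1) * Real.sqrt (π/(((m:ℝ)+1)*κ))) := by
    intro m
    simp only [hF]
    rw [integral_const_mul, int_gaussK_pow hκ m]
  have hFnorm : ∀ m, ∫ s, ‖F m s‖
      = |bc m| * (2*lam)^m * (B^(m+1) * Real.sqrt (π/(((m:ℝ)+1)*κ))) := by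
    intro m
    have heq : ∀ s:ℝ, ‖F m s‖ = |bc m| * (2*lam)^m * (ψ s^2)^(m+1) := by
      intro s
      simp only [hF]
      rw [Real.norm_eq_abs, abs_mul, abs_mul, abs_of_nonneg (a := (2*lam)^m) (by positivity),
        abs_of_nonneg (a := (ψ s^2)^(m+1)) (by positivity)]
    simp_rw [heq]
    rw [integral_const_mul, int_gaussK_pow hκ m]
  have hbound : ∀ m, ∫ s, ‖F m s‖ ≤ (2*lam*B)^m := by
    intro m
    rw [hFnorm m]
    have h2 : Real.sqrt (π/(((m:ℝ)+1)*κ)) ≤ Real.sqrt (π/κ) := by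
      refine Real.sqrt_le_sqrt ?_
      refine div_le_div_of_nonneg_left hπ.le hκ ?_
      nlinarith [Nat.cast_nonneg (α := ℝ) m]
    have h1 : B^(m+1) * Real.sqrt (π/(((m:ℝ)+1)*κ)) ≤ B^m := by
      calc B^(m+1) * Real.sqrt (π/(((m:ℝ)+1)*κ)) ≤ B^(m+1) * Real.sqrt (π/κ) := by
            exact mul_le_mul_of_nonneg_left h2 (by positivity)
      _ = B^m * (B * Real.sqrt (π/κ)) := by rw [pow_succ]; ring
      _ = B^m := by rw [hBπκ, mul_one]
    calc |bc m| * (2*lam)^m * (B^(m+1) * Real.sqrt (π/(((m:ℝ)+1)*κ)))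
        ≤ 1 * (2*lam)^m * (B^m) := by
          refine mul_le_mul (mul_le_mul_of_nonneg_right (bc_abs_le_one m) (by positivity))
            h1 (by positivity) (by positivity)
    _ = (2*lam*B)^m := by rw [mul_pow]; ring
  have hsum_norm : Summable (fun m => ∫ s, ‖F m s‖) :=
    Summable.of_nonneg_of_le (fun m => integral_nonneg (fun s => norm_nonneg _)) hbound
      (summable_geometric_of_lt_one (by positivity) hr1)
  have hswap := integral_tsum_of_summable_integral_norm hFint hsum_norm
  have hptsum : ∀ s : ℝ, Real.sqrt (1 + 2*lam*ψ s^2) * ψ s^2 = ∑' m, F m s := by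
    intro s
    rw [sqrt_eq_bS (hx01 s) (hxlt s), bS, ← tsum_mul_right]
    refine tsum_congr (fun m => ?_)
    simp only [hF]
    rw [mul_pow (2*lam) (ψ s^2) m]
    ring
  have hI3 : ∫ s, Real.sqrt (1 + 2*lam*ψ s^2) * ψ s^2 = ∑' m, ∫ s, F m s :=
    calc ∫ s, Real.sqrt (1 + 2*lam*ψ s^2) * ψ s^2 = ∫ s, ∑' m, F m s :=
          integral_congr_ae (Filter.Eventually.of_forall (fun s => hptsum s))
    _ = ∑' m, ∫ s, F m s := hswap.symm
  set T : ℕ → ℝ := fun m => bc m * (2*lam)^m * (B^(m+1) * Real.sqrt (π/(((m:ℝ)+1)*κ))) with hT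
  have hTabs : ∀ m, |T m| = ∫ s, ‖F m s‖ := by
    intro m
    rw [hFnorm m]
    simp only [hT]
    rw [abs_mul, abs_mul, abs_of_nonneg (a := (2*lam)^m) (by positivity),
      abs_of_nonneg (a := B^(m+1) * Real.sqrt (π/(((m:ℝ)+1)*κ))) (by positivity)]
  have hTsummable : Summable T := by
    refine Summable.of_norm_bounded (g := fun m => ∫ s, ‖F m s‖) hsum_norm (fun m => ?_)
    rw [Real.norm_eq_abs, hTabs m]
  have hT0 : T 0 = 1 := by
    simp only [hT]
    norm_num [bc]
    exact hBπκ
  have hTsucc : ∀ k : ℕ, T (k+1) = aCoef (k+2) * lam^(k+1) * Real.sqrt κ ^ (k+1) := by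
    intro k
    have hcast : (((k+1 : ℕ)):ℝ) + 1 = (k:ℝ)+2 := by push_cast; ring
    have := term_eq hκ lam k
    simp only [hT]
    rw [hcast, ← this]
    ring
  have hsumT1 : Summable (fun k : ℕ => T (k+1)) := (summable_nat_add_iff 1).mpr hTsummable
  have hsum1 : Summable (fun k : ℕ => aCoef (k+2) * lam^(k+1) * Real.sqrt κ ^ (k+1)) :=
    hsumT1.congr hTsucc
  refine ⟨hsum1.abs, ?_⟩
  have hI3' : ∫ s, Real.sqrt (1 + 2*lam*ψ s^2) * ψ s^2
      = 1 + ∑' k : ℕ, aCoef (k+2) * lam^(k+1) * Real.sqrt κ ^ (k+1) := by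
    rw [hI3, show (fun m => ∫ s, F m s) = T from funext hFval]
    rw [Summable.tsum_eq_zero_add hTsummable, hT0]
    congr 1
    exact tsum_congr hTsucc
  rw [energy, hintD, hint2, hI3']
  have hκ0 : κ ≠ 0 := ne_of_gt hκ
  field_simp

end
end

section
/- Let C_ω > 0 and λ > 0, and let ψ_κ(s) = (κ/π)^{1/4}·e^{−κs²/2} for κ > 0. Then there exists a unique κ(λ) > 0 such that E_λ(ψ_{κ(λ)}) = inf{E_λ(ψ_κ) : κ > 0}, i.e. the function κ ↦ E_λ(ψ_κ) attains its infimum on (0, +∞) at exactly one point. -/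
open MeasureTheory Real Filter Topology

noncomputable section

namespace Stmt19Helpers

lemma exp_neg_sq_le_one (u : ℝ) : Real.exp (-u^2) ≤ 1 := by
  rw [Real.exp_le_one_iff]; nlinarith [sq_nonneg u]

lemma integrable_exp_neg_sq : Integrable (fun u : ℝ => Real.exp (-u^2)) := by
  have := integrable_exp_neg_mul_sq (b := (1:ℝ)) one_pos
  simpa using this

lemma integrable_sq_mul_exp {b : ℝ} (hb : 0 < b) :
    Integrable (fun s : ℝ => s ^ 2 * Real.exp (-b * s ^ 2)) := by
  have h := integrable_rpow_mul_exp_neg_mul_sq hb (s := (2:ℝ)) (by norm_num)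
  have h2 : ∀ x : ℝ, x ^ (2:ℝ) = x ^ (2:ℕ) := fun x => by
    rw [← Real.rpow_natCast x 2]; norm_num
  simpa [h2] using h

lemma tendsto_mul_exp_cocompact {b : ℝ} (hb : 0 < b) :
    Tendsto (fun s : ℝ => s * Real.exp (-b * s^2)) (cocompact ℝ) (𝓝 0) := by
  have h := tendsto_rpow_abs_mul_exp_neg_mul_sq_cocompact hb 1
  refine squeeze_zero_norm (fun s => ?_) (by simpa using h)
  rw [norm_mul, Real.norm_eq_abs, Real.norm_eq_abs, abs_of_pos (Real.exp_pos _), neg_mul]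

lemma integral_sq_mul_exp {b : ℝ} (hb : 0 < b) :
    ∫ s : ℝ, s ^ 2 * Real.exp (-b * s ^ 2) = Real.sqrt (π / b) / (2 * b) := by
  set A : ℝ → ℝ := fun s => -(1/(2*b)) * (s * Real.exp (-b * s^2)) with hA
  set A' : ℝ → ℝ := fun s => s^2 * Real.exp (-b*s^2) - Real.exp (-b*s^2)/(2*b) with hA'
  have hder : ∀ s, HasDerivAt A (A' s) s := by
    intro s
    have h1 : HasDerivAt (fun s : ℝ => -b * s^2) (-b * (2*s)) s := by
      simpa using (hasDerivAt_pow 2 s).const_mul (-b)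
    have h4 := ((hasDerivAt_id s).mul h1.exp).const_mul (-(1/(2*b)))
    refine h4.congr_deriv (Eq.symm ?_)
    simp only [hA', id_eq]
    field_simp
    ring
  have hint : Integrable A' :=
    (integrable_sq_mul_exp hb).sub ((integrable_exp_neg_mul_sq hb).div_const _)
  have hAc : Tendsto A (cocompact ℝ) (𝓝 0) := by
    have h := (tendsto_mul_exp_cocompact hb).const_mul (-(1/(2*b)))
    rw [mul_zero] at h; exact h
  have hcc : cocompact ℝ = atBot ⊔ atTop := cocompact_eq_atBot_atTop
  have htop : Tendsto A atTop (𝓝 0) := hAc.mono_left (by rw [hcc]; exact le_sup_right)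
  have hbot : Tendsto A atBot (𝓝 0) := hAc.mono_left (by rw [hcc]; exact le_sup_left)
  have hIoi : ∫ s in Set.Ioi (0:ℝ), A' s = 0 - A 0 :=
    integral_Ioi_of_hasDerivAt_of_tendsto' (fun x _ => hder x) hint.integrableOn htop
  have hIic : ∫ s in Set.Iic (0:ℝ), A' s = A 0 - 0 :=
    integral_Iic_of_hasDerivAt_of_tendsto' (fun x _ => hder x) hint.integrableOn hbot
  have hzero : ∫ s : ℝ, A' s = 0 := by
    rw [← intervalIntegral.integral_Iic_add_Ioi hint.integrableOn hint.integrableOn, hIoi, hIic]; ring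
  have hsplit : (fun s : ℝ => s^2 * Real.exp (-b*s^2))
      = fun s => A' s + Real.exp (-b*s^2)/(2*b) := by
    funext s; simp only [hA']; ring
  rw [hsplit, integral_add hint ((integrable_exp_neg_mul_sq hb).div_const _), hzero,
    integral_div, integral_gaussian]
  ring

def Jfun (x : ℝ) : ℝ := ∫ u : ℝ, Real.sqrt (1 + x * Real.exp (-u^2)) * Real.exp (-u^2)

def Jder (x : ℝ) : ℝ :=
  ∫ u : ℝ, Real.exp (-u^2) ^ 2 / (2 * Real.sqrt (1 + x * Real.exp (-u^2)))

lemma one_add_pos {x u : ℝ} (hx : 0 ≤ x) : 0 < 1 + x * Real.exp (-u^2) := by positivity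

lemma sqrt_one_le {x u : ℝ} (hx : 0 ≤ x) : 1 ≤ Real.sqrt (1 + x * Real.exp (-u^2)) := by
  have h := Real.sqrt_le_sqrt (show (1:ℝ) ≤ 1 + x * Real.exp (-u^2) by
    nlinarith [Real.exp_pos (-u^2), mul_nonneg hx (Real.exp_pos (-u^2)).le])
  rwa [Real.sqrt_one] at h

lemma contI (y : ℝ) : Continuous fun u : ℝ => Real.sqrt (1 + y * Real.exp (-u^2)) * Real.exp (-u^2) := by
  have ce : Continuous fun u : ℝ => Real.exp (-u^2) :=
    Real.continuous_exp.comp ((continuous_pow 2).neg)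
  exact (Real.continuous_sqrt.comp (continuous_const.add (continuous_const.mul ce))).mul ce

lemma Jfun_nonneg {x : ℝ} (hx : 0 ≤ x) : 0 ≤ Jfun x :=
  integral_nonneg fun u => by positivity

lemma Jfun_hasDerivAt {x : ℝ} (hx : 0 < x) : HasDerivAt Jfun (Jder x) x := by
  have ce : Continuous fun u : ℝ => Real.exp (-u^2) :=
    Real.continuous_exp.comp ((continuous_pow 2).neg)
  have main := hasDerivAt_integral_of_dominated_loc_of_deriv_le
    (μ := (volume : Measure ℝ))
    (F := fun y u => Real.sqrt (1 + y * Real.exp (-u^2)) * Real.exp (-u^2))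
    (F' := fun y u => Real.exp (-u^2)^2 / (2 * Real.sqrt (1 + y * Real.exp (-u^2))))
    (x₀ := x) (bound := fun u => Real.exp (-u^2)) (s := Metric.ball x (x/2)) (Metric.ball_mem_nhds x (by positivity))
    (Eventually.of_forall fun y => (contI y).aestronglyMeasurable)
    ?_ ?_ ?_ ?_ ?_
  · exact main.2
  · refine Integrable.mono' (integrable_exp_neg_sq.const_mul (Real.sqrt (1+x)))
      (contI x).aestronglyMeasurable (Eventually.of_forall fun u => ?_)
    have h1 : (0:ℝ) < 1 + x * Real.exp (-u^2) := one_add_pos hx.le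
    rw [Real.norm_eq_abs, abs_of_nonneg (by positivity)]
    have h2 : Real.sqrt (1 + x * Real.exp (-u^2)) ≤ Real.sqrt (1 + x) :=
      Real.sqrt_le_sqrt (by nlinarith [exp_neg_sq_le_one u, Real.exp_pos (-u^2)])
    exact mul_le_mul_of_nonneg_right h2 (Real.exp_pos _).le
  · have hd : ∀ u : ℝ, (2 * Real.sqrt (1 + x * Real.exp (-u^2))) ≠ 0 := fun u => by
      have := one_add_pos (x := x) (u := u) hx.le
      positivity
    exact ((ce.pow 2).div
      (continuous_const.mul (Real.continuous_sqrt.comp (continuous_const.add (continuous_const.mul ce)))) hd).aestronglyMeasurable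
  · refine Eventually.of_forall fun u => fun y hy => ?_
    have hy2 : 0 < y := by
      rw [Metric.mem_ball, Real.dist_eq, abs_sub_lt_iff] at hy
      linarith [hy.2]
    have h1 : (0:ℝ) < 1 + y * Real.exp (-u^2) := one_add_pos hy2.le
    have hs1 : 1 ≤ Real.sqrt (1 + y * Real.exp (-u^2)) := sqrt_one_le hy2.le
    rw [Real.norm_eq_abs, abs_of_nonneg (by positivity)]
    rw [div_le_iff₀ (by positivity)]
    nlinarith [Real.exp_pos (-u^2), exp_neg_sq_le_one u]
  · exact integrable_exp_neg_sq
  · refine Eventually.of_forall fun u => fun y hy => ?_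
    have hy2 : 0 < y := by
      rw [Metric.mem_ball, Real.dist_eq, abs_sub_lt_iff] at hy
      linarith [hy.2]
    have h1 : (0:ℝ) < 1 + y * Real.exp (-u^2) := one_add_pos hy2.le
    have hlin : HasDerivAt (fun y : ℝ => 1 + y * Real.exp (-u^2)) (Real.exp (-u^2)) y := by
      simpa using (hasDerivAt_id y).mul_const (Real.exp (-u^2)) |>.const_add 1
    have h2 := (hlin.sqrt h1.ne').mul_const (Real.exp (-u^2))
    refine h2.congr_deriv (Eq.symm ?_)
    rw [pow_two]; ring

lemma cube_mul_Jder_lt {x₁ x₂ : ℝ} (h1 : 0 < x₁) (h2 : x₁ < x₂) :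
    x₁^3 * Jder x₁ < x₂^3 * Jder x₂ := by
  have ce : Continuous fun u : ℝ => Real.exp (-u^2) :=
    Real.continuous_exp.comp ((continuous_pow 2).neg)
  have contF : ∀ x : ℝ, 0 < x → Continuous
      (fun u : ℝ => x^3 * (Real.exp (-u^2)^2 / (2 * Real.sqrt (1 + x * Real.exp (-u^2))))) := by
    intro x hx
    have hd : ∀ u : ℝ, (2 * Real.sqrt (1 + x * Real.exp (-u^2))) ≠ 0 := fun u => by
      have := one_add_pos (x := x) (u := u) hx.le
      positivity
    exact continuous_const.mul ((ce.pow 2).div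
      (continuous_const.mul (Real.continuous_sqrt.comp (continuous_const.add (continuous_const.mul ce)))) hd)
  have intF : ∀ x : ℝ, 0 < x → Integrable
      (fun u : ℝ => x^3 * (Real.exp (-u^2)^2 / (2 * Real.sqrt (1 + x * Real.exp (-u^2))))) := by
    intro x hx
    refine Integrable.mono' (integrable_exp_neg_sq.const_mul (x^3)) ((contF x hx).aestronglyMeasurable)
      (Eventually.of_forall fun u => ?_)
    have h1 : (0:ℝ) < 1 + x * Real.exp (-u^2) := one_add_pos hx.le
    have hs1 : 1 ≤ Real.sqrt (1 + x * Real.exp (-u^2)) := sqrt_one_le hx.le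
    rw [Real.norm_eq_abs, abs_of_nonneg (by positivity)]
    rw [mul_div_assoc']
    rw [div_le_iff₀ (by positivity)]
    have hxe : 0 < x^3 * Real.exp (-u^2) := by positivity
    nlinarith [hxe, hs1, exp_neg_sq_le_one u,
      mul_le_mul_of_nonneg_left (exp_neg_sq_le_one u) hxe.le,
      mul_le_mul_of_nonneg_left hs1 hxe.le]
  have ptwise : ∀ u : ℝ,
      x₁^3 * (Real.exp (-u^2)^2 / (2 * Real.sqrt (1 + x₁ * Real.exp (-u^2)))) <
      x₂^3 * (Real.exp (-u^2)^2 / (2 * Real.sqrt (1 + x₂ * Real.exp (-u^2)))) := by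
    intro u
    set e := Real.exp (-u^2) with he
    have hep : 0 < e := Real.exp_pos _
    have hp1 : (0:ℝ) < 1 + x₁ * e := one_add_pos h1.le
    have hp2 : (0:ℝ) < 1 + x₂ * e := one_add_pos (h1.trans h2).le
    set s₁ := Real.sqrt (1 + x₁ * e) with hs₁
    set s₂ := Real.sqrt (1 + x₂ * e) with hs₂
    have hs1p : 0 < s₁ := Real.sqrt_pos.2 hp1
    have hs2p : 0 < s₂ := Real.sqrt_pos.2 hp2
    have hsq1 : s₁^2 = 1 + x₁ * e := Real.sq_sqrt hp1.le
    have hsq2 : s₂^2 = 1 + x₂ * e := Real.sq_sqrt hp2.le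
    have key : x₁^3 * s₂ < x₂^3 * s₁ := by
      have h6 : x₁^6 * (1 + x₂*e) < x₂^6 * (1 + x₁*e) := by
        have k1 : x₁^6 < x₂^6 := pow_lt_pow_left₀ h2 h1.le (by norm_num)
        have k5 : x₁^5 ≤ x₂^5 := pow_le_pow_left₀ h1.le h2.le 5
        nlinarith [mul_pos h1 (h1.trans h2), mul_pos (mul_pos h1 (h1.trans h2)) hep]
      have hsqlt : (x₁^3 * s₂)^2 < (x₂^3 * s₁)^2 := by
        rw [mul_pow, mul_pow, hsq1, hsq2]
        nlinarith [h6]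
      exact lt_of_pow_lt_pow_left₀ 2 (mul_nonneg (pow_nonneg (h1.trans h2).le 3) hs1p.le) hsqlt
    rw [mul_div_assoc', mul_div_assoc', div_lt_div_iff₀ (by positivity) (by positivity)]
    nlinarith [mul_lt_mul_of_pos_left key (show (0:ℝ) < 2 * e^2 by positivity)]
  have e1 : x₁^3 * Jder x₁ = ∫ u : ℝ, x₁^3 * (Real.exp (-u^2)^2 / (2 * Real.sqrt (1 + x₁ * Real.exp (-u^2)))) :=
    (integral_const_mul _ _).symm
  have e2 : x₂^3 * Jder x₂ = ∫ u : ℝ, x₂^3 * (Real.exp (-u^2)^2 / (2 * Real.sqrt (1 + x₂ * Real.exp (-u^2)))) :=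
    (integral_const_mul _ _).symm
  rw [e1, e2, ← sub_pos, ← integral_sub (intF x₂ (h1.trans h2)) (intF x₁ h1)]
  rw [integral_pos_iff_support_of_nonneg_ae (Eventually.of_forall fun u => (sub_pos.2 (ptwise u)).le)
    ((intF x₂ (h1.trans h2)).sub (intF x₁ h1))]
  rw [show Function.support (fun u : ℝ => x₂^3 * (Real.exp (-u^2)^2 / (2 * Real.sqrt (1 + x₂ * Real.exp (-u^2)))) - x₁^3 * (Real.exp (-u^2)^2 / (2 * Real.sqrt (1 + x₁ * Real.exp (-u^2))))) = Set.univ from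
    Set.eq_univ_of_forall fun u => Function.mem_support.2 (sub_pos.2 (ptwise u)).ne']
  rw [Real.volume_univ]
  norm_num

lemma gaussK_sq {κ : ℝ} (hκ : 0 < κ) (s : ℝ) :
    (gaussK κ s)^2 = Real.sqrt (κ/π) * Real.exp (-(κ * s^2)) := by
  unfold gaussK
  rw [mul_pow, pow_two (Real.exp _), ← Real.exp_add]
  congr 1
  · rw [← Real.rpow_natCast ((κ/π) ^ ((1:ℝ)/4)) 2, ← Real.rpow_mul (by positivity : (0:ℝ) ≤ κ/π)]
    rw [Real.sqrt_eq_rpow]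
    norm_num
  · ring

lemma moment {κ : ℝ} (hκ : 0 < κ) :
    ∫ s : ℝ, s^2 * (gaussK κ s)^2 = 1/(2*κ) := by
  have h1 : (fun s : ℝ => s^2 * (gaussK κ s)^2)
      = fun s : ℝ => Real.sqrt (κ/π) * (s^2 * Real.exp (-κ * s^2)) := by
    funext s; rw [gaussK_sq hκ s]; rw [neg_mul]; ring
  rw [h1, integral_const_mul, integral_sq_mul_exp hκ]
  have h2 : Real.sqrt (κ/π) * Real.sqrt (π/κ) = 1 := by
    rw [← Real.sqrt_mul (by positivity : (0:ℝ) ≤ κ/π)]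
    rw [show κ/π * (π/κ) = 1 by field_simp]
    exact Real.sqrt_one
  rw [mul_div_assoc', h2]

lemma kinetic {κ : ℝ} (hκ : 0 < κ) :
    ∫ s : ℝ, (gaussKD κ s)^2 = κ/2 := by
  have h1 : (fun s : ℝ => (gaussKD κ s)^2) = fun s : ℝ => κ^2 * (s^2 * (gaussK κ s)^2) := by
    funext s; unfold gaussKD; ring
  rw [h1, integral_const_mul, moment hκ]
  field_simp

lemma nonlinear {κ lam : ℝ} (hκ : 0 < κ) :
    ∫ s : ℝ, Real.sqrt (1 + 2*lam*(gaussK κ s)^2) * (gaussK κ s)^2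
      = (1/Real.sqrt π) * Jfun ((2*lam/Real.sqrt π) * Real.sqrt κ) := by
  have hsκ : 0 < Real.sqrt κ := Real.sqrt_pos.2 hκ
  have hsπ : 0 < Real.sqrt π := Real.sqrt_pos.2 pi_pos
  set q := Real.sqrt (κ/π) with hq
  have hqpos : 0 < q := Real.sqrt_pos.2 (by positivity)
  have h1 : ∀ s : ℝ, Real.sqrt (1 + 2*lam*(gaussK κ s)^2) * (gaussK κ s)^2
      = Real.sqrt (1 + 2*lam*q*Real.exp (-(Real.sqrt κ * s)^2)) * (q * Real.exp (-(Real.sqrt κ * s)^2)) := by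
    intro s
    have hss : (Real.sqrt κ * s)^2 = κ * s^2 := by
      rw [mul_pow, Real.sq_sqrt hκ.le]
    rw [hss, gaussK_sq hκ s]
    rw [show 2*lam*(Real.sqrt (κ/π)*Real.exp (-(κ*s^2))) = 2*lam*Real.sqrt (κ/π)*Real.exp (-(κ*s^2)) from by ring]
  simp_rw [h1]
  have h2 := MeasureTheory.Measure.integral_comp_mul_left
    (fun u => Real.sqrt (1 + 2*lam*q*Real.exp (-u^2)) * (q * Real.exp (-u^2))) (Real.sqrt κ)
  rw [h2, smul_eq_mul, abs_of_pos (by positivity)]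
  have h3 : (fun u : ℝ => Real.sqrt (1 + 2*lam*q*Real.exp (-u^2)) * (q * Real.exp (-u^2)))
      = fun u : ℝ => q * (Real.sqrt (1 + (2*lam*q)*Real.exp (-u^2)) * Real.exp (-u^2)) := by
    funext u; ring
  rw [h3, integral_const_mul]
  have h4 : (∫ u : ℝ, Real.sqrt (1 + (2*lam*q)*Real.exp (-u^2)) * Real.exp (-u^2)) = Jfun (2*lam*q) := rfl
  rw [h4]
  have hq' : q = Real.sqrt κ / Real.sqrt π := by rw [hq, Real.sqrt_div hκ.le]
  rw [show 2*lam*q = 2*lam/Real.sqrt π * Real.sqrt κ by rw [hq']; ring]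
  rw [hq']
  field_simp

lemma energy_eq (Cω lam : ℝ) {κ : ℝ} (hκ : 0 < κ) :
    energy Cω lam (gaussK κ) (gaussKD κ)
      = κ/2 + 1/(2*κ) + (Cω/Real.sqrt π) * Jfun ((2*lam/Real.sqrt π) * Real.sqrt κ) := by
  unfold energy
  rw [kinetic hκ, moment hκ, nonlinear hκ]
  ring

end Stmt19Helpers

open Stmt19Helpers
/-- the function `κ ↦ E_λ(ψ_κ)` attains its infimum on `(0,∞)`
at exactly one point `κ(λ)`. -/
theorem stmt_19 (Cω lam : ℝ) (hCω : 0 < Cω) (hlam : 0 < lam) :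
    ∃! κ₀ : ℝ, κ₀ ∈ Set.Ioi (0 : ℝ) ∧
      ∀ κ ∈ Set.Ioi (0 : ℝ),
        energy Cω lam (gaussK κ₀) (gaussKD κ₀) ≤ energy Cω lam (gaussK κ) (gaussKD κ) := by
  have hπ : 0 < Real.sqrt π := Real.sqrt_pos.2 pi_pos
  set c : ℝ := 2 * lam / Real.sqrt π with hc
  have hcpos : 0 < c := by positivity
  set K : ℝ := Cω / Real.sqrt π with hK
  have hKpos : 0 < K := by positivity
  set Φ : ℝ → ℝ := fun κ => κ/2 + 1/(2*κ) + K * Jfun (c * Real.sqrt κ) with hΦ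
  have hE : ∀ κ ∈ Set.Ioi (0:ℝ), energy Cω lam (gaussK κ) (gaussKD κ) = Φ κ := by
    intro κ hκ
    rw [energy_eq Cω lam hκ]
  set F : ℝ → ℝ := fun κ => κ^2 - 1 + (K*c)*(κ * Real.sqrt κ * Jder (c * Real.sqrt κ)) with hF
  have hderiv : ∀ κ ∈ Set.Ioi (0:ℝ), HasDerivAt Φ (F κ / (2*κ^2)) κ := by
    intro κ hκ
    have hκ0 : (0:ℝ) < κ := hκ
    have hsq : 0 < Real.sqrt κ := Real.sqrt_pos.2 hκ0
    have hss : Real.sqrt κ * Real.sqrt κ = κ := Real.mul_self_sqrt hκ0.le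
    have h1 : HasDerivAt (fun κ : ℝ => κ/2) (1/2) κ := (hasDerivAt_id κ).div_const 2
    have h2 : HasDerivAt (fun κ : ℝ => 1/(2*κ)) (-2/(2*κ)^2) κ := by
      have := (((hasDerivAt_id κ).const_mul 2).inv (by positivity)).const_mul 1
      simpa [one_div] using this
    have h3 : HasDerivAt (fun κ : ℝ => Jfun (c * Real.sqrt κ))
        (Jder (c * Real.sqrt κ) * (c * (1/(2*Real.sqrt κ)))) κ := by
      have hinner : HasDerivAt (fun κ : ℝ => c * Real.sqrt κ) (c * (1/(2*Real.sqrt κ))) κ :=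
        (Real.hasDerivAt_sqrt hκ0.ne').const_mul c
      exact (Jfun_hasDerivAt (by positivity)).comp κ hinner
    have htot := (h1.add h2).add (h3.const_mul K)
    refine htot.congr_deriv (Eq.symm ?_)
    rw [hF]
    field_simp
    ring_nf
    rw [Real.sq_sqrt hκ0.le]
    ring
  have hFmono : StrictMonoOn F (Set.Ioi (0:ℝ)) := by
    intro a ha b hb hab
    have ha0 : (0:ℝ) < a := ha
    have hb0 : (0:ℝ) < b := hb
    have key : ∀ κ : ℝ, 0 < κ → κ * Real.sqrt κ * Jder (c * Real.sqrt κ)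
        = ((c * Real.sqrt κ)^3 * Jder (c * Real.sqrt κ)) / c^3 := by
      intro κ hκ0
      have hss : Real.sqrt κ * Real.sqrt κ = κ := Real.mul_self_sqrt hκ0.le
      rw [mul_pow, show Real.sqrt κ ^ 3 = κ * Real.sqrt κ by rw [pow_succ, pow_two, hss]]
      field_simp
    have hcube := cube_mul_Jder_lt (show 0 < c * Real.sqrt a by positivity)
      (mul_lt_mul_of_pos_left (Real.sqrt_lt_sqrt ha0.le hab) hcpos)
    have h7 : (K*c)*(a * Real.sqrt a * Jder (c * Real.sqrt a))
        < (K*c)*(b * Real.sqrt b * Jder (c * Real.sqrt b)) := by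
      rw [key a ha0, key b hb0]
      have hKc : 0 < K * c := by positivity
      exact mul_lt_mul_of_pos_left ((div_lt_div_iff_of_pos_right (pow_pos hcpos 3)).2 hcube) hKc
    have h6 : a^2 < b^2 := pow_lt_pow_left₀ hab ha0.le (by norm_num)
    simp only [hF]
    linarith
  -- existence of a minimizer
  have hcont : ContinuousOn Φ (Set.Ioi (0:ℝ)) :=
    fun κ hκ => ((hderiv κ hκ).continuousAt).continuousWithinAt
  have hlower : ∀ κ ∈ Set.Ioi (0:ℝ), κ/2 + 1/(2*κ) ≤ Φ κ := by
    intro κ hκ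
    have hκ0 : (0:ℝ) < κ := hκ
    have h0 : 0 ≤ K * Jfun (c * Real.sqrt κ) :=
      mul_nonneg hKpos.le (Jfun_nonneg (by positivity))
    rw [hΦ]
    dsimp only
    linarith
  clear_value c K Φ F
  obtain ⟨M, hM⟩ : ∃ M : ℝ, M = Φ 1 := ⟨_, rfl⟩
  have hM1 : 1 ≤ M := by
    have h := hlower 1 (by norm_num)
    rw [← hM] at h
    norm_num at h
    linarith
  obtain ⟨a, b, ha, hb⟩ : ∃ a b : ℝ, a = 1/(2*M+1) ∧ b = 2*M+1 := ⟨_, _, rfl, rfl⟩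
  have h2M : (0:ℝ) < 2*M+1 := by linarith
  have ha0 : 0 < a := by rw [ha]; exact one_div_pos.2 h2M
  have hab1 : a ≤ 1 := by
    rw [ha, div_le_one h2M]
    linarith
  have h1b : (1:ℝ) ≤ b := by rw [hb]; linarith
  have hsub : Set.Icc a b ⊆ Set.Ioi (0:ℝ) := fun x hx => lt_of_lt_of_le ha0 hx.1
  obtain ⟨κ₀, hκ₀mem, hκ₀min⟩ := isCompact_Icc.exists_isMinOn
    (Set.nonempty_Icc.2 (hab1.trans h1b)) (hcont.mono hsub)
  have hκ₀ : κ₀ ∈ Set.Ioi (0:ℝ) := hsub hκ₀mem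
  have h1mem : (1:ℝ) ∈ Set.Icc a b := ⟨hab1, h1b⟩
  have hκ₀M : Φ κ₀ ≤ M := by rw [hM]; exact hκ₀min h1mem
  have hmin : ∀ κ ∈ Set.Ioi (0:ℝ), Φ κ₀ ≤ Φ κ := by
    intro κ hκ
    have hκ0 : (0:ℝ) < κ := hκ
    by_cases hmem : κ ∈ Set.Icc a b
    · exact hκ₀min hmem
    · rw [Set.mem_Icc, not_and_or] at hmem
      have hlow := hlower κ hκ
      rcases hmem with hlt | hgt
      · push_neg at hlt
        have h2a : 1/(2*a) = (2*M+1)/2 := by rw [ha]; field_simp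
        have : 1/(2*a) < 1/(2*κ) := by
          apply one_div_lt_one_div_of_lt (by positivity)
          linarith
        rw [h2a] at this
        linarith
      · push_neg at hgt
        have hbk : b/2 < κ/2 := by linarith
        have h0 : 0 < 1/(2*κ) := by positivity
        rw [hb] at hbk
        linarith
  -- criticality implies F = 0
  have crit : ∀ κ ∈ Set.Ioi (0:ℝ), (∀ κ' ∈ Set.Ioi (0:ℝ), Φ κ ≤ Φ κ') → F κ = 0 := by
    intro κ hκ hmin'
    have hκ0 : (0:ℝ) < κ := hκ
    have hloc : IsLocalMin Φ κ := by
      filter_upwards [isOpen_Ioi.mem_nhds hκ] with y hy using hmin' y hy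
    have h0 := hloc.hasDerivAt_eq_zero (hderiv κ hκ)
    rcases div_eq_zero_iff.1 h0 with h | h
    · exact h
    · exact absurd h (mul_pos two_pos (pow_pos hκ0 2)).ne'
  refine ⟨κ₀, ⟨hκ₀, ?_⟩, ?_⟩
  · intro κ hκ
    rw [hE κ₀ hκ₀, hE κ hκ]
    exact hmin κ hκ
  · rintro κ₁ ⟨hκ₁, hm1⟩
    have hm1' : ∀ κ ∈ Set.Ioi (0:ℝ), Φ κ₁ ≤ Φ κ := by
      intro κ hκ
      rw [← hE κ₁ hκ₁, ← hE κ hκ]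
      exact hm1 κ hκ
    exact hFmono.injOn hκ₁ hκ₀ ((crit κ₁ hκ₁ hm1').trans (crit κ₀ hκ₀ hmin).symm)

end
end
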